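/- arXiv:1210.1065 — 3 statements merged into one kernel-verified Lean document; each statement's English description precedes it below -/
import Mathlib

section
/- For each τ ∈ G, let I_τ denote the product of all maximal ideals M of S for which f(τ,τ⁻¹) ∉ M. Then applying τ⁻¹ to I_τ gives I_{τ⁻¹}, i.e. (I_τ)^{τ⁻¹} = I_{τ⁻¹}. -/
open scoped BigOperators

/-- A (two-sided) hereditary ring: every left ideal and every right ideal
is projective as a module. -/
def IsHereditaryRing (R : Type*) [Ring R] : Prop :=
  (∀ I : Ideal R, Module.Projective R I) ∧
  (∀ I : Ideal Rᵐᵒᵖ, Module.Projective Rᵐᵒᵖ I)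

/-- `B` is a `V`-order in the finite-dimensional `F`-algebra `D`:
a subring which is a finitely generated `V`-module and spans `D` over `F`. -/
def IsOrder (V F : Type*) {D : Type*} [CommRing V] [Field F] [Ring D]
    [Algebra F D] [Algebra V D] (B : Subalgebra V D) : Prop :=
  (Subalgebra.toSubmodule B).FG ∧ Submodule.span F (B : Set D) = ⊤

/-- A maximal `V`-order: a `V`-order not properly contained in any other `V`-order. -/
def IsMaximalOrder (V F : Type*) {D : Type*} [CommRing V] [Field F] [Ring D]
    [Algebra F D] [Algebra V D] (B : Subalgebra V D) : Prop :=
  IsOrder V F B ∧ ∀ C : Subalgebra V D, IsOrder V F C → B ≤ C → C = B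

/-- A hereditary `V`-order: a `V`-order all of whose one-sided ideals are projective. -/
def IsHereditaryOrder (V F : Type*) {D : Type*} [CommRing V] [Field F] [Ring D]
    [Algebra F D] [Algebra V D] (B : Subalgebra V D) : Prop :=
  IsOrder V F B ∧ IsHereditaryRing B

/-- A primary ring: the quotient by the Jacobson radical is a simple ring. -/
def IsPrimaryRing (R : Type*) [Ring R] : Prop :=
  ∃ J : TwoSidedIdeal R, (∀ r : R, r ∈ J ↔ r ∈ Ideal.jacobson (⊥ : Ideal R)) ∧
    IsSimpleRing J.ringCon.Quotient

/-- A normalized two-cocycle on `Gal(K/F)` with values in `K ∖ {0}`. -/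
def IsNormalizedCocycle {F K : Type*} [Field F] [Field K] [Algebra F K]
    (f : (K ≃ₐ[F] K) → (K ≃ₐ[F] K) → K) : Prop :=
  (∀ σ τ ρ : K ≃ₐ[F] K, f σ τ * f (σ * τ) ρ = σ (f τ ρ) * f σ (τ * ρ)) ∧
  (∀ σ, f 1 σ = 1) ∧ (∀ σ, f σ 1 = 1) ∧ (∀ σ τ, f σ τ ≠ 0)

/-- `(D, ι, x)` realizes the crossed-product algebra `Σ_f = ⊕_σ K x_σ`, and
`A` is the crossed-product order `A_f = ⊕_σ S x_σ`, where `S` is the coefficient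
ring (a subring of `K`). -/
structure IsCrossedProduct {V F K : Type*} [CommRing V] [Field F] [Field K]
    [Algebra V F] [Algebra F K] [Algebra V K] [IsScalarTower V F K]
    [Fintype (K ≃ₐ[F] K)]
    (S : Subring K)
    (f : (K ≃ₐ[F] K) → (K ≃ₐ[F] K) → K)
    {D : Type*} [Ring D] [Algebra F D] [Algebra V D] [IsScalarTower V F D]
    (ι : K →ₐ[F] D) (x : (K ≃ₐ[F] K) → D)
    (A : Subalgebra V D) : Prop where
  /-- `{x_σ}` is a `K`-basis of `D`. -/
  basis : ∀ y : D, ∃! c : (K ≃ₐ[F] K) → K, y = ∑ σ, ι (c σ) * x σ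
  x_one : x 1 = 1
  x_mul_coeff : ∀ (σ : K ≃ₐ[F] K) (s : K), x σ * ι s = ι (σ s) * x σ
  x_mul_x : ∀ σ τ : K ≃ₐ[F] K, x σ * x τ = ι (f σ τ) * x (σ * τ)
  mem_A : ∀ y : D, y ∈ A ↔
    ∃ c : (K ≃ₐ[F] K) → K, (∀ σ, c σ ∈ S) ∧ y = ∑ σ, ι (c σ) * x σ

section Gal

variable (V F K : Type*) [CommRing V] [Field F] [Field K]
  [Algebra V F] [Algebra F K] [Algebra V K] [IsScalarTower V F K]

/-- The action of `τ ∈ Gal(K/F)` on `S`, the integral closure of `V` in `K`. -/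
def galS (τ : K ≃ₐ[F] K) : integralClosure V K →+* integralClosure V K where
  toFun s := ⟨τ s, ((mem_integralClosure_iff V K).1 s.2).map (τ.toAlgHom.restrictScalars V)⟩
  map_one' := by ext; simp
  map_mul' a b := by ext; simp
  map_zero' := by ext; simp
  map_add' a b := by ext; simp

end Gal

section CrossedProductOrders

universe u

variable (V : Type*) [CommRing V] [IsDomain V] [IsDiscreteValuationRing V]
  (F : Type*) [Field F] [Algebra V F] [IsFractionRing V F]
  (K : Type*) [Field K] [Algebra F K] [Algebra V K] [IsScalarTower V F K]
  [FiniteDimensional F K] [IsGalois F K]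
  -- `S`, the integral closure of `V` in `K`, is unramified over `V`
  [Algebra.FormallyUnramified V (integralClosure V K)]


section Aux

variable {V F K : Type*} [CommRing V] [Field F] [Field K]
  [Algebra V F] [Algebra F K] [Algebra V K] [IsScalarTower V F K]

/-- `galS` as a ring equivalence. -/
def galSEquiv (τ : K ≃ₐ[F] K) : integralClosure V K ≃+* integralClosure V K where
  toFun := galS V F K τ
  invFun := galS V F K τ⁻¹
  left_inv s := by
    ext
    show τ⁻¹ (τ (s : K)) = (s : K)
    exact τ.symm_apply_apply _
  right_inv s := by
    ext
    show τ (τ⁻¹ (s : K)) = (s : K)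
    exact τ.apply_symm_apply _
  map_mul' := (galS V F K τ).map_mul
  map_add' := (galS V F K τ).map_add

@[simp] lemma galSEquiv_apply (τ : K ≃ₐ[F] K) (s : integralClosure V K) :
    (galSEquiv (V := V) (F := F) τ s : K) = τ (s : K) := rfl

/-- The induced `MulEquiv` on ideals of `S`. -/
def idealMapEquiv (e : integralClosure V K ≃+* integralClosure V K) :
    Ideal (integralClosure V K) ≃* Ideal (integralClosure V K) where
  toFun I := Ideal.map (e : integralClosure V K →+* integralClosure V K) I
  invFun I := Ideal.map (e.symm : integralClosure V K →+* integralClosure V K) I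
  left_inv I := Ideal.map_of_equiv e
  right_inv I := by simpa using Ideal.map_of_equiv e.symm
  map_mul' I J := Ideal.map_mul _ I J

end Aux

/-- **Lemma.** For `τ ∈ G`, let `I_τ = ∏_{M maximal, f(τ,τ⁻¹) ∉ M} M` (a product of
maximal ideals of `S = integralClosure V K`).  Then `(I_τ)^{τ⁻¹} = I_{τ⁻¹}`. -/
theorem map_inv_prod_maximal_not_mem_eq
    (f : (K ≃ₐ[F] K) → (K ≃ₐ[F] K) → K)
    (hf : IsNormalizedCocycle f)
    (hfS : ∀ σ τ : K ≃ₐ[F] K, f σ τ ∈ integralClosure V K)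
    (τ : K ≃ₐ[F] K) :
    Ideal.map (galS V F K τ⁻¹)
      (∏ᶠ (M : Ideal (integralClosure V K))
        (_ : M.IsMaximal ∧ (⟨f τ τ⁻¹, hfS τ τ⁻¹⟩ : integralClosure V K) ∉ M), M) =
    ∏ᶠ (M : Ideal (integralClosure V K))
        (_ : M.IsMaximal ∧ (⟨f τ⁻¹ τ, hfS τ⁻¹ τ⟩ : integralClosure V K) ∉ M), M := by
  classical
  have h1 : f (τ⁻¹ * τ) τ⁻¹ = 1 := by rw [inv_mul_cancel]; exact hf.2.1 τ⁻¹
  have h2 : f τ⁻¹ (τ * τ⁻¹) = 1 := by rw [mul_inv_cancel]; exact hf.2.2.1 τ⁻¹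
  have hb : (⟨f τ⁻¹ τ, hfS τ⁻¹ τ⟩ : integralClosure V K)
      = galS V F K τ⁻¹ ⟨f τ τ⁻¹, hfS τ τ⁻¹⟩ := by
    ext
    have hco := hf.1 τ⁻¹ τ τ⁻¹
    rw [h1, h2, mul_one, mul_one] at hco
    simpa [galS] using hco
  set ψ := galSEquiv (V := V) (F := F) (τ⁻¹ : K ≃ₐ[F] K) with hψ
  set e := idealMapEquiv ψ with hedef
  have step1 : Ideal.map (galS V F K τ⁻¹)
      (∏ᶠ (M : Ideal (integralClosure V K))
        (_ : M.IsMaximal ∧ (⟨f τ τ⁻¹, hfS τ τ⁻¹⟩ : integralClosure V K) ∉ M), M) =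
      ∏ᶠ (M : Ideal (integralClosure V K)),
        e (∏ᶠ (_ : M.IsMaximal ∧ (⟨f τ τ⁻¹, hfS τ τ⁻¹⟩ : integralClosure V K) ∉ M), M) :=
    e.map_finprod _
  rw [step1]
  refine finprod_eq_of_bijective e (EquivLike.bijective e) fun M => ?_
  have step2 : e (∏ᶠ (_ : M.IsMaximal ∧ (⟨f τ τ⁻¹, hfS τ τ⁻¹⟩ : integralClosure V K) ∉ M), M) =
      ∏ᶠ (_ : M.IsMaximal ∧ (⟨f τ τ⁻¹, hfS τ τ⁻¹⟩ : integralClosure V K) ∉ M), e M :=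
    e.toMonoidHom.map_finprod_Prop _
  refine step2.trans ?_
  have hmem : (⟨f τ τ⁻¹, hfS τ τ⁻¹⟩ : integralClosure V K) ∈ M ↔
      (⟨f τ⁻¹ τ, hfS τ⁻¹ τ⟩ : integralClosure V K) ∈ e M := by
    rw [hb]
    constructor
    · intro h
      exact Ideal.mem_map_of_mem _ h
    · intro h
      have h' : (⟨f τ τ⁻¹, hfS τ τ⁻¹⟩ : integralClosure V K) ∈
          Ideal.comap (ψ : integralClosure V K →+* integralClosure V K)
            (Ideal.map (ψ : integralClosure V K →+* integralClosure V K) M) :=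
        Ideal.mem_comap.2 h
      rwa [Ideal.comap_map_of_bijective
        (ψ : integralClosure V K →+* integralClosure V K) ψ.bijective] at h'
  have hmax : M.IsMaximal ↔ (e M).IsMaximal := by
    constructor
    · intro h
      exact Ideal.IsMaximal.map_bijective (ψ : integralClosure V K →+* integralClosure V K)
        ψ.bijective h
    · intro h
      have h' : (Ideal.map (ψ.symm : integralClosure V K →+* integralClosure V K)
          (Ideal.map (ψ : integralClosure V K →+* integralClosure V K) M)).IsMaximal :=
        Ideal.IsMaximal.map_bijective _ ψ.symm.bijective h
      rwa [Ideal.map_of_equiv ψ] at h'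
  exact finprod_congr_Prop (propext (and_congr hmax (not_congr hmem))) fun _ => rfl

end CrossedProductOrders
end

section
/- Suppose f(τ,τ⁻¹) ∉ M² for every τ ∈ G and every maximal ideal M of S. Then for each τ ∈ G one has I_τ · f(τ,τ⁻¹) = J(V)S, where I_τ is the product of all maximal ideals M of S with f(τ,τ⁻¹) ∉ M. -/
open scoped BigOperators

section PolyUnramified

open Algebra Polynomial
open scoped TensorProduct

namespace Algebra.FormallyUnramified

universe x y

variable (K : Type x) (A : Type y) [Field K] [CommRing A] [Algebra K A]
variable [FormallyUnramified K A] [EssFiniteType K A]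

theorem bijective_of_isAlgClosed_of_isLocalRing'
    [IsAlgClosed K] [IsLocalRing A] :
    Function.Bijective (algebraMap K A) := by
  have := finite_of_free (R := K) (S := A)
  have : IsArtinianRing A := isArtinian_of_tower K inferInstance
  have hA : IsNilpotent (IsLocalRing.maximalIdeal A) := by
    rw [← IsLocalRing.jacobson_eq_maximalIdeal ⊥]
    · exact IsArtinianRing.isNilpotent_jacobson_bot
    · exact bot_ne_top
  have : Function.Bijective (Algebra.ofId K (A ⧸ IsLocalRing.maximalIdeal A)) :=
    ⟨RingHom.injective _, IsAlgClosed.algebraMap_bijective_of_isIntegral.2⟩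
  let e : K ≃ₐ[K] A ⧸ IsLocalRing.maximalIdeal A := {
    __ := Algebra.ofId K (A ⧸ IsLocalRing.maximalIdeal A)
    __ := Equiv.ofBijective _ this }
  let e' : A ⊗[K] (A ⧸ IsLocalRing.maximalIdeal A) ≃ₐ[A] A :=
    (Algebra.TensorProduct.congr AlgEquiv.refl e.symm).trans (Algebra.TensorProduct.rid K A A)
  let f : A ⧸ IsLocalRing.maximalIdeal A →ₗ[A] A := e'.toLinearMap.comp (sec K A _)
  have hf : (Algebra.ofId _ _).toLinearMap ∘ₗ f = LinearMap.id := by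
    dsimp [f]
    rw [← LinearMap.comp_assoc, ← comp_sec K A]
    congr 1
    apply LinearMap.restrictScalars_injective K
    apply _root_.TensorProduct.ext'
    intros r s
    obtain ⟨s, rfl⟩ := e.surjective s
    suffices s • (Ideal.Quotient.mk (IsLocalRing.maximalIdeal A)) r = r • e s by
      simpa [ofId, e']
    simp [Algebra.smul_def, e, ofId, mul_comm]
  have hf₁ : f 1 • (1 : A ⧸ IsLocalRing.maximalIdeal A) = 1 := by
    rw [← algebraMap_eq_smul_one]
    exact LinearMap.congr_fun hf 1
  have hf₂ : 1 - f 1 ∈ IsLocalRing.maximalIdeal A := by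
    rw [← Ideal.Quotient.eq_zero_iff_mem, map_sub, map_one, ← Ideal.Quotient.algebraMap_eq,
     algebraMap_eq_smul_one, hf₁, sub_self]
  have hf₃ : IsIdempotentElem (1 - f 1) := by
    apply IsIdempotentElem.one_sub
    rw [IsIdempotentElem, ← smul_eq_mul, ← map_smul, hf₁]
  have hf₄ : f 1 = 1 := by
    obtain ⟨n, hn⟩ := hA
    have : (1 - f 1) ^ n = 0 := by
      rw [← Ideal.mem_bot, ← Ideal.zero_eq_bot, ← hn]
      exact Ideal.pow_mem_pow hf₂ n
    rw [eq_comm, ← sub_eq_zero, ← hf₃.pow_succ_eq n, pow_succ, this, zero_mul]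
  refine Equiv.bijective ⟨algebraMap K A, ⇑e.symm ∘ ⇑(algebraMap A _), fun x ↦ by simp, fun x ↦ ?_⟩
  have : ⇑(algebraMap K A) = ⇑f ∘ ⇑e := by
    ext k
    conv_rhs => rw [← mul_one k, ← smul_eq_mul, Function.comp_apply, map_smul,
      LinearMap.map_smul_of_tower, map_one, hf₄, ← algebraMap_eq_smul_one]
  rw [this]
  simp only [Function.comp_apply, AlgEquiv.apply_symm_apply, algebraMap_eq_smul_one,
    map_smul, hf₄, smul_eq_mul, mul_one]

theorem isField_of_isAlgClosed_of_isLocalRing'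
    [IsAlgClosed K] [IsLocalRing A] : IsField A := by
  rw [IsLocalRing.isField_iff_maximalIdeal_eq, eq_bot_iff]
  intro x hx
  obtain ⟨x, rfl⟩ := (bijective_of_isAlgClosed_of_isLocalRing' K A).surjective x
  show _ = 0
  rw [← (algebraMap K A).map_zero]
  by_contra hx'
  exact hx ((isUnit_iff_ne_zero.mpr
    (fun e ↦ hx' ((algebraMap K A).congr_arg e))).map (algebraMap K A))

include K in
theorem isReduced_of_field' :
    IsReduced A := by
  constructor
  intro x hx
  let f := (Algebra.TensorProduct.includeRight (R := K) (A := AlgebraicClosure K) (B := A))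
  have : Function.Injective f := by
    have : ⇑f = (LinearMap.rTensor A (Algebra.ofId K (AlgebraicClosure K)).toLinearMap).comp
        (Algebra.TensorProduct.lid K A).symm.toLinearMap := by
      ext x; simp [f]
    rw [this]
    suffices Function.Injective
        (LinearMap.rTensor A (Algebra.ofId K (AlgebraicClosure K)).toLinearMap) by
      exact this.comp (Algebra.TensorProduct.lid K A).symm.injective
    apply Module.Flat.rTensor_preserves_injective_linearMap
    exact (algebraMap K _).injective
  apply this
  rw [map_zero]
  apply eq_zero_of_localization
  intro M hM
  have hy := (hx.map f).map (algebraMap _ (Localization.AtPrime M))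
  generalize algebraMap _ (Localization.AtPrime M) (f x) = y at *
  have := EssFiniteType.of_isLocalization (Localization.AtPrime M) M.primeCompl
  have := of_isLocalization (Rₘ := Localization.AtPrime M) M.primeCompl
  have := EssFiniteType.comp (AlgebraicClosure K) (AlgebraicClosure K ⊗[K] A)
    (Localization.AtPrime M)
  have := comp (AlgebraicClosure K) (AlgebraicClosure K ⊗[K] A)
    (Localization.AtPrime M)
  letI := (isField_of_isAlgClosed_of_isLocalRing' (AlgebraicClosure K)
    (A := Localization.AtPrime M)).toField
  exact hy.eq_zero

end Algebra.FormallyUnramified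

end PolyUnramified

section DedekindAux

open UniqueFactorizationMonoid in
/-- In a Dedekind domain, a nonzero ideal not contained in the square of any prime
is the product of the primes (taken from a set `T` containing all of them) containing it. -/
lemma Ideal.eq_prod_primeDivisors' {R : Type*} [CommRing R] [IsDedekindDomain R] {n : Ideal R}
    (hn : n ≠ ⊥) (hsq : ∀ P : Ideal R, P.IsPrime → ¬n ≤ P ^ 2)
    (T : Finset (Ideal R)) (hT : ∀ P : Ideal R, P.IsPrime → n ≤ P → P ∈ T)
    (hT' : ∀ P ∈ T, P.IsPrime) [DecidablePred fun P : Ideal R => n ≤ P] :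
    ∏ P ∈ T.filter (fun P => n ≤ P), P = n := by
  classical
  have hbot : ∀ P ∈ T.filter (fun P => n ≤ P), P ≠ ⊥ := by
    intro P hP h
    exact hn (le_bot_iff.mp (h ▸ (Finset.mem_filter.mp hP).2))
  refine le_antisymm (Ideal.le_of_dvd ?_) (Ideal.le_of_dvd ?_)
  · -- n ∣ ∏, i.e. ∏ ≤ n
    have hle : normalizedFactors n ≤ (T.filter (fun P => n ≤ P)).val := by
      rw [Multiset.le_iff_count]
      intro Q
      by_cases hQ : Q ∈ normalizedFactors n
      · have hQm := (Ideal.mem_normalizedFactors_iff hn).mp hQ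
        have hmem : Q ∈ T.filter (fun P => n ≤ P) :=
          Finset.mem_filter.mpr ⟨hT _ hQm.1 hQm.2, hQm.2⟩
        rw [Multiset.count_eq_one_of_mem (T.filter _).nodup hmem]
        by_contra hc
        push_neg at hc
        have h2 : Multiset.replicate 2 Q ≤ normalizedFactors n :=
          Multiset.le_count_iff_replicate_le.mp hc
        have hdvd : Q ^ 2 ∣ n := by
          have := Multiset.prod_dvd_prod_of_le h2
          rwa [Multiset.prod_replicate, prod_normalizedFactors_eq_self hn] at this
        exact hsq Q hQm.1 (Ideal.le_of_dvd hdvd)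
      · simp [Multiset.count_eq_zero_of_notMem hQ]
    rw [Finset.prod_eq_multiset_prod, Multiset.map_id']
    calc n = (normalizedFactors n).prod := (prod_normalizedFactors_eq_self hn).symm
    _ ∣ _ := Multiset.prod_dvd_prod_of_le hle
  · -- ∏ ∣ n
    refine Finset.prod_primes_dvd n ?_ ?_
    · intro P hP
      exact (Ideal.prime_iff_isPrime (hbot P hP)).mpr (hT' P (Finset.mem_filter.mp hP).1)
    · intro P hP
      exact Ideal.dvd_iff_le.mpr (Finset.mem_filter.mp hP).2

/-- In a Dedekind domain, a nonzero radical ideal is not contained in the square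
of a prime ideal. -/
lemma Ideal.IsRadical.not_le_sq {R : Type*} [CommRing R] [IsDedekindDomain R] {n : Ideal R}
    (hrad : n.IsRadical) (hn : n ≠ ⊥) {P : Ideal R} (hP : P.IsPrime) : ¬n ≤ P ^ 2 := by
  intro hle
  have hPbot : P ≠ ⊥ := by
    rintro rfl
    rw [pow_two, Ideal.bot_mul] at hle
    exact hn (le_bot_iff.mp hle)
  obtain ⟨C, hC⟩ := Ideal.dvd_iff_le.mpr hle
  have hC0 : C ≠ 0 := by
    rintro rfl
    rw [mul_zero] at hC
    exact hn hC
  have hD2 : P * C * (P * C) ≤ n := by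
    calc P * C * (P * C) = P ^ 2 * C * C := by ring
    _ ≤ P ^ 2 * C * ⊤ := Ideal.mul_mono_right le_top
    _ = n := by rw [mul_top, hC]
  have hDn : P * C ≤ n := by
    intro x hx
    refine hrad ⟨2, ?_⟩
    rw [pow_two]
    exact hD2 (Ideal.mul_mem_mul hx hx)
  obtain ⟨E, hE⟩ := Ideal.dvd_iff_le.mpr hDn
  have hPC : P * C ≠ 0 := mul_ne_zero (by rwa [Ideal.zero_eq_bot]) hC0
  have heq : (P * C) * (P * E) = P * C := by
    conv_rhs => rw [hE, hC]
    ring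
  have h1 : P * E = 1 := by
    rcases mul_right_eq_self₀.mp heq with h | h
    · exact h
    · exact absurd h hPC
  exact hP.ne_top (Ideal.isUnit_iff.mp (isUnit_of_dvd_one ⟨E, h1.symm⟩))

/-- The key ideal-theoretic computation, abstracted over a Dedekind domain. -/
lemma dedekind_main_aux {S : Type*} [CommRing S] [IsDedekindDomain S] {p : Ideal S}
    (hp0 : p ≠ ⊥) (hrad : p.IsRadical)
    (hpM : ∀ M : Ideal S, M.IsMaximal → p ≤ M)
    {s : S} (hs0 : s ≠ 0)
    (hsq : ∀ M : Ideal S, M.IsMaximal → s ∉ M ^ 2) :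
    (∏ᶠ (M : Ideal S) (_ : M.IsMaximal ∧ s ∉ M), M) * Ideal.span {s} = p := by
  classical
  have hfin : {M : Ideal S | M.IsMaximal}.Finite := by
    have h1 := Ideal.finite_factors (I := p) hp0
    have h2 : {M : Ideal S | M.IsMaximal} ⊆
        (fun v : IsDedekindDomain.HeightOneSpectrum S => v.asIdeal) ''
          {v | v.asIdeal ∣ p} := by
      intro M hM
      have hMbot : M ≠ ⊥ := fun h => hp0 (le_bot_iff.mp (h ▸ hpM M hM))
      exact ⟨⟨M, hM.isPrime, hMbot⟩, Ideal.dvd_iff_le.mpr (hpM M hM), rfl⟩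
    exact (h1.image _).subset h2
  set T := hfin.toFinset with hTdef
  have hmemT : ∀ M : Ideal S, M ∈ T ↔ M.IsMaximal := fun M => hfin.mem_toFinset
  have hspan0 : Ideal.span {s} ≠ ⊥ := by
    simpa [Ideal.span_singleton_eq_bot] using hs0
  have hprime_of_T : ∀ P ∈ T, P.IsPrime := fun P hP => ((hmemT P).mp hP).isPrime
  have hmax_of : ∀ (n : Ideal S), n ≠ ⊥ → ∀ P : Ideal S, P.IsPrime → n ≤ P → P ∈ T := by
    intro n hn P hP hle
    have hPbot : P ≠ ⊥ := fun h => hn (le_bot_iff.mp (h ▸ hle))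
    exact (hmemT P).mpr (hP.isMaximal hPbot)
  have hsqp : ∀ P : Ideal S, P.IsPrime → ¬p ≤ P ^ 2 := fun _ hP => hrad.not_le_sq hp0 hP
  have hsqs : ∀ P : Ideal S, P.IsPrime → ¬Ideal.span {s} ≤ P ^ 2 := by
    intro P hP hle
    have hPbot : P ≠ ⊥ := by
      rintro rfl
      rw [pow_two, Ideal.bot_mul] at hle
      exact hspan0 (le_bot_iff.mp hle)
    exact hsq P (hP.isMaximal hPbot)
      (hle (Ideal.subset_span (Set.mem_singleton s)))
  have hA := Ideal.eq_prod_primeDivisors' hp0 hsqp T (hmax_of p hp0) hprime_of_T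
  have hB := Ideal.eq_prod_primeDivisors' hspan0 hsqs T (hmax_of _ hspan0) hprime_of_T
  have hfp : (∏ᶠ (M : Ideal S) (_ : M.IsMaximal ∧ s ∉ M), M) =
      ∏ M ∈ T.filter (fun M => s ∉ M), M := by
    apply finprod_cond_eq_prod_of_cond_iff
    intro M _
    simp only [Finset.mem_filter, hmemT]
  have hfilter : T.filter (fun P => Ideal.span {s} ≤ P) = T.filter (fun M => ¬s ∉ M) := by
    apply Finset.filter_congr
    intro M _
    simp [Ideal.span_singleton_le_iff_mem]
  rw [hfp, ← hB, hfilter, Finset.prod_filter_mul_prod_filter_not T (fun M => s ∉ M), ← hA,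
    Finset.filter_true_of_mem (fun M hM => hpM M ((hmemT M).mp hM))]

end DedekindAux

section CrossedProductOrders

universe u

variable (V : Type*) [CommRing V] [IsDomain V] [IsDiscreteValuationRing V]
  (F : Type*) [Field F] [Algebra V F] [IsFractionRing V F]
  (K : Type*) [Field K] [Algebra F K] [Algebra V K] [IsScalarTower V F K]
  [FiniteDimensional F K] [IsGalois F K]
  -- `S`, the integral closure of `V` in `K`, is unramified over `V`
  [Algebra.FormallyUnramified V (integralClosure V K)]

set_option maxHeartbeats 1000000 in
set_option synthInstance.maxHeartbeats 400000 in
/-- Suppose `f(τ,τ⁻¹) ∉ M²` for every `τ ∈ G` and every maximal ideal `M` of `S`.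
Then for each `τ ∈ G`, `I_τ · f(τ,τ⁻¹) = J(V)S`, where
`I_τ = ∏_{M maximal, f(τ,τ⁻¹) ∉ M} M`. -/
theorem prod_maximal_not_mem_mul_span_eq_map_maximalIdeal
    (f : (K ≃ₐ[F] K) → (K ≃ₐ[F] K) → K)
    (hf : IsNormalizedCocycle f)
    (hfS : ∀ σ τ : K ≃ₐ[F] K, f σ τ ∈ integralClosure V K)
    (hsf : ∀ (τ : K ≃ₐ[F] K) (M : Ideal (integralClosure V K)), M.IsMaximal →
      (⟨f τ τ⁻¹, hfS τ τ⁻¹⟩ : integralClosure V K) ∉ M ^ 2)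
    (τ : K ≃ₐ[F] K) :
    (∏ᶠ (M : Ideal (integralClosure V K))
        (_ : M.IsMaximal ∧ (⟨f τ τ⁻¹, hfS τ τ⁻¹⟩ : integralClosure V K) ∉ M), M) *
      Ideal.span {(⟨f τ τ⁻¹, hfS τ τ⁻¹⟩ : integralClosure V K)} =
    Ideal.map (algebraMap V (integralClosure V K)) (IsLocalRing.maximalIdeal V) := by
  haveI : IsDedekindDomain (integralClosure V K) := integralClosure.isDedekindDomain V F K
  haveI : Module.Finite V (integralClosure V K) :=
    IsIntegralClosure.finite V F K (integralClosure V K)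
  have hinjVK : Function.Injective (algebraMap V K) := by
    rw [IsScalarTower.algebraMap_eq V F K]
    exact (algebraMap F K).injective.comp (IsFractionRing.injective V F)
  have hinj : Function.Injective (algebraMap V (integralClosure V K)) := by
    intro a b hab
    apply hinjVK
    rw [IsScalarTower.algebraMap_eq V (integralClosure V K) K, RingHom.comp_apply,
      RingHom.comp_apply, hab]
  have hp0 : Ideal.map (algebraMap V (integralClosure V K)) (IsLocalRing.maximalIdeal V) ≠ ⊥ := by
    rw [Ne, Ideal.map_eq_bot_iff_of_injective hinj]
    exact IsDiscreteValuationRing.not_a_field V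
  have hpM : ∀ M : Ideal (integralClosure V K), M.IsMaximal →
      Ideal.map (algebraMap V (integralClosure V K)) (IsLocalRing.maximalIdeal V) ≤ M := by
    intro M hM
    have hcm : (M.comap (algebraMap V (integralClosure V K))).IsMaximal :=
      Ideal.isMaximal_comap_of_isIntegral_of_isMaximal M
    rw [Ideal.map_le_iff_le_comap, ← IsLocalRing.eq_maximalIdeal hcm]
  have hrad : (Ideal.map (algebraMap V (integralClosure V K))
      (IsLocalRing.maximalIdeal V)).IsRadical := by
    rw [Ideal.isRadical_iff_quotient_reduced]
    haveI : Module.Finite V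
        (integralClosure V K ⧸ Ideal.map (algebraMap V (integralClosure V K))
          (IsLocalRing.maximalIdeal V)) :=
      Module.Finite.of_surjective
        (Ideal.Quotient.mkₐ V _).toLinearMap (Ideal.Quotient.mkₐ_surjective V _)
    haveI : Module.Finite (V ⧸ IsLocalRing.maximalIdeal V)
        (integralClosure V K ⧸ Ideal.map (algebraMap V (integralClosure V K))
          (IsLocalRing.maximalIdeal V)) :=
      Module.Finite.of_restrictScalars_finite V _ _
    haveI : Algebra.FormallyUnramified (V ⧸ IsLocalRing.maximalIdeal V)
        (integralClosure V K ⧸ Ideal.map (algebraMap V (integralClosure V K))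
          (IsLocalRing.maximalIdeal V)) :=
      Algebra.FormallyUnramified.of_restrictScalars V _ _
    letI := Ideal.Quotient.field (IsLocalRing.maximalIdeal V)
    exact Algebra.FormallyUnramified.isReduced_of_field'
      (V ⧸ IsLocalRing.maximalIdeal V) _
  have hs0 : (⟨f τ τ⁻¹, hfS τ τ⁻¹⟩ : integralClosure V K) ≠ 0 := by
    intro h
    exact hf.2.2.2 τ τ⁻¹ (by simpa using congrArg Subtype.val h)
  exact dedekind_main_aux hp0 hrad hpM hs0 (fun M hM => hsf τ M hM)

end CrossedProductOrders
end

section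
/- Assume S is a discrete valuation ring with valuation v having value group ℤ, assume H ≠ G, and assume A_f is a maximal order, so that H is normal in G, G/H is cyclic generated by σH for some σ ∈ G with v(f(σ,σ⁻¹)) ≤ 1, and the graph of f is the chain H ≤ σH ≤ σ²H ≤ ⋯ ≤ σ^{m−1}H where m = |G/H|. Then v(f(σ^i, σ^{−i})) ≤ 1 for all 1 ≤ i ≤ m−1, and consequently v(f(τ,τ⁻¹)) ≤ 1 (i.e. f(τ,τ⁻¹) ∉ J(S)²) for every τ ∈ G. -/
open scoped BigOperators

set_option synthInstance.maxHeartbeats 1000000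
set_option maxHeartbeats 1000000

theorem crossed_abstract {G R : Type*} [Group G] [CommRing R]
    (g : G → G → R) (φ : G → R →+* R)
    (ccl : ∀ α β γ : G, g α β * g (α*β) γ = φ α (g β γ) * g α (β*γ))
    (hu : ∀ (α : G) (a : R), IsUnit (φ α a) ↔ IsUnit a)
    (n1 : ∀ α, g 1 α = 1) (n2 : ∀ α, g α 1 = 1)
    (J2 : Ideal R) (hJ2unit : ∀ a ∈ J2, ¬ IsUnit a)
    (σ : G) (m : ℕ) (hm : 0 < m)
    (hne : ∃ τ, ¬ IsUnit (g τ τ⁻¹))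
    (hσ : g σ σ⁻¹ ∉ J2)
    (hcosets : ∀ τ, ∃! i : Fin m,
      IsUnit (g ((σ^(i:ℕ))⁻¹ * τ) (((σ^(i:ℕ))⁻¹ * τ)⁻¹)))
    (hchain : ∀ i j : Fin m,
      IsUnit (g (σ^(i:ℕ)) ((σ^(i:ℕ))⁻¹ * σ^(j:ℕ))) ↔ (i:ℕ) ≤ (j:ℕ)) :
    (∀ i : ℕ, 1 ≤ i → i ≤ m-1 → g (σ^i) (σ^i)⁻¹ ∉ J2) ∧ ∀ τ, g τ τ⁻¹ ∉ J2 := by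
  -- cancel a unit on the left inside J2
  have cancel : ∀ c a : R, IsUnit c → c * a ∈ J2 → a ∈ J2 := by
    rintro c a ⟨u, rfl⟩ h
    have : (↑u⁻¹ : R) * (↑u * a) ∈ J2 := Ideal.mul_mem_left _ _ h
    rwa [Units.inv_mul_cancel_left] at this
  -- m ≥ 2
  have hm2 : 2 ≤ m := by
    by_contra hlt
    obtain ⟨τ, hτ⟩ := hne
    obtain ⟨i, hi, -⟩ := hcosets τ
    have : (i : ℕ) = 0 := by omega
    rw [this, pow_zero, inv_one, one_mul] at hi
    exact hτ hi
  -- symmetry of H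
  have symm : ∀ α : G, IsUnit (g α α⁻¹) → IsUnit (g α⁻¹ α) := by
    intro α h
    have e := ccl α α⁻¹ α
    rw [mul_inv_cancel, inv_mul_cancel, n1, n2, mul_one, mul_one] at e
    rw [e] at h
    exact (hu α _).mp h
  have memH_inv : ∀ α : G, IsUnit (g α α⁻¹) → IsUnit (g α⁻¹ (α⁻¹)⁻¹) := by
    intro α h; rw [inv_inv]; exact symm α h
  -- h ∈ H implies g h τ is a unit for all τ
  have hHleft : ∀ h τ : G, IsUnit (g h h⁻¹) → IsUnit (g h τ) := by
    intro h τ hh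
    have e := ccl h h⁻¹ (h * τ)
    rw [mul_inv_cancel, n1, inv_mul_cancel_left, mul_one] at e
    rw [e] at hh
    exact isUnit_of_mul_isUnit_right hh
  -- h ∈ H implies g τ h is a unit for all τ
  have hHright : ∀ h τ : G, IsUnit (g h h⁻¹) → IsUnit (g τ h) := by
    intro h τ hh
    have e := ccl τ h h⁻¹
    rw [mul_inv_cancel, n2, mul_one] at e
    have : IsUnit (φ τ (g h h⁻¹)) := (hu τ _).mpr hh
    rw [← e] at this
    exact isUnit_of_mul_isUnit_left this
  -- transitivity
  have htrans : ∀ α β γ : G, IsUnit (g α (α⁻¹ * β)) → IsUnit (g β (β⁻¹ * γ)) →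
      IsUnit (g α (α⁻¹ * γ)) := by
    intro α β γ h1 h2
    have e := ccl α (α⁻¹ * β) (β⁻¹ * γ)
    simp only [mul_assoc, mul_inv_cancel_left] at e
    have : IsUnit (g α (α⁻¹ * β) * g β (β⁻¹ * γ)) := h1.mul h2
    rw [e] at this
    exact isUnit_of_mul_isUnit_right this
  -- g 1 1 = 1 is a unit, used for coset of σ^k at index k
  have g11 : IsUnit (g (1:G) (1:G)⁻¹) := by rw [inv_one, n1]; exact isUnit_one
  -- σ^m ∈ H
  have hσm : IsUnit (g (σ^m) (σ^m)⁻¹) := by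
    obtain ⟨i, hi, -⟩ := hcosets (σ^m)
    by_cases hi0 : (i : ℕ) = 0
    · rwa [hi0, pow_zero, inv_one, one_mul] at hi
    · exfalso
      set k := m - (i : ℕ) with hk
      have hik : (σ ^ (i:ℕ))⁻¹ * σ ^ m = σ ^ k := by
        rw [inv_mul_eq_iff_eq_mul, ← pow_add]
        congr 1
        omega
      rw [hik] at hi
      obtain ⟨j, -, hjun⟩ := hcosets (σ ^ k)
      have h1 : (⟨k, by omega⟩ : Fin m) = j := by
        apply hjun
        simp only [inv_mul_cancel, inv_one, n1]
        exact isUnit_one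
      have h2 : (⟨0, by omega⟩ : Fin m) = j := by
        apply hjun
        simpa [pow_zero, inv_one, one_mul] using hi
      rw [← h2] at h1
      have : k = 0 := by simpa using congrArg Fin.val h1
      omega
  have hσminv : IsUnit (g (σ^m)⁻¹ ((σ^m)⁻¹)⁻¹) := memH_inv _ hσm
  -- Part 1
  have part1 : ∀ i : ℕ, 1 ≤ i → i ≤ m-1 → g (σ^i) (σ^i)⁻¹ ∉ J2 := by
    intro i h1 h2 hmem
    obtain ⟨k, rfl⟩ : ∃ k, i = k+1 := ⟨i-1, by omega⟩
    have him : k+1 < m := by omega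
    -- u := g σ (σ^k) is a unit
    have hu1 : IsUnit (g σ (σ^k)) := by
      have := (hchain ⟨1, by omega⟩ ⟨k+1, him⟩).mpr (by simp)
      simp only [pow_one] at this
      rwa [pow_succ', inv_mul_cancel_left] at this
    -- w := g (σ^k) ((σ^(k+1))⁻¹) is a unit
    have hw : IsUnit (g (σ^k) ((σ^(k+1))⁻¹)) := by
      have hA : IsUnit (g (σ^k) ((σ^k)⁻¹ * σ^(m-1))) := by
        have := (hchain ⟨k, by omega⟩ ⟨m-1, by omega⟩).mpr
          (by simpa using (by omega : k ≤ m-1))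
        simpa using this
      have hB : IsUnit (g (σ^(m-1)) ((σ^(m-1))⁻¹ * σ⁻¹)) := by
        have hmm : (σ^(m-1))⁻¹ * σ⁻¹ = (σ^m)⁻¹ := by
          conv_rhs => rw [show m = (m-1)+1 by omega, pow_succ', mul_inv_rev]
        rw [hmm]
        exact hHright _ _ hσminv
      have := htrans (σ^k) (σ^(m-1)) σ⁻¹ hA hB
      rwa [show (σ^k)⁻¹ * σ⁻¹ = (σ^(k+1))⁻¹ by rw [pow_succ', mul_inv_rev]] at this
    -- the cocycle identity
    have e := ccl σ (σ^k) ((σ^(k+1))⁻¹)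
    have e1 : σ * σ^k = σ^(k+1) := (pow_succ' σ k).symm
    have e2 : σ^k * (σ^(k+1))⁻¹ = σ⁻¹ := by
      rw [pow_succ', mul_inv_rev, mul_inv_cancel_left]
    rw [e1, e2] at e
    have : g σ (σ^k) * g (σ^(k+1)) (σ^(k+1))⁻¹ ∈ J2 := Ideal.mul_mem_left _ _ hmem
    rw [e] at this
    exact hσ (cancel _ _ ((hu σ _).mpr hw) this)
  refine ⟨part1, ?_⟩
  -- Part 2
  intro τ
  obtain ⟨i, hi, -⟩ := hcosets τ
  by_cases hi0 : (i : ℕ) = 0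
  · rw [hi0, pow_zero, inv_one, one_mul] at hi
    exact fun hmem => hJ2unit _ hmem hi
  · intro hmem
    set h : G := (σ^(i:ℕ))⁻¹ * τ with hh
    have e := ccl (σ^(i:ℕ)) h τ⁻¹
    have e1 : σ^(i:ℕ) * h = τ := by rw [hh, mul_inv_cancel_left]
    have e2 : h * τ⁻¹ = (σ^(i:ℕ))⁻¹ := by rw [hh, mul_inv_cancel_right]
    rw [e1, e2] at e
    have hmem2 : g (σ^(i:ℕ)) h * g τ τ⁻¹ ∈ J2 := Ideal.mul_mem_left _ _ hmem
    rw [e] at hmem2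
    have hunit : IsUnit (φ (σ^(i:ℕ)) (g h τ⁻¹)) := (hu _ _).mpr (hHleft _ _ hi)
    exact part1 (i:ℕ) (by omega) (by omega : (i:ℕ) ≤ m-1) (cancel _ _ hunit hmem2)

section CrossedProductOrders

universe u

variable (V : Type*) [CommRing V] [IsDomain V] [IsDiscreteValuationRing V]
  (F : Type*) [Field F] [Algebra V F] [IsFractionRing V F]
  (K : Type*) [Field K] [Algebra F K] [Algebra V K] [IsScalarTower V F K]
  [FiniteDimensional F K] [IsGalois F K]
  -- `S`, the integral closure of `V` in `K`, is unramified over `V`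
  [Algebra.FormallyUnramified V (integralClosure V K)]

/-- Assume `S` is a discrete valuation ring, `H ≠ G`, and `A_f` is a maximal order, so
that `H = {τ : f(τ,τ⁻¹) ∈ U(S)}` is normal in `G`, `G/H` is cyclic of order `m`
generated by `σH` for some `σ` with `v(f(σ,σ⁻¹)) ≤ 1`, and the graph of `f` is the
chain `H ≤ σH ≤ ⋯ ≤ σ^{m-1}H`.  Then `v(f(σ^i,σ^{-i})) ≤ 1` for all `1 ≤ i ≤ m-1`,
and consequently `f(τ,τ⁻¹) ∉ J(S)²` for every `τ ∈ G`. -/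
theorem valuation_cocycle_le_one_of_maximal
    [IsDiscreteValuationRing (integralClosure V K)]
    (f : (K ≃ₐ[F] K) → (K ≃ₐ[F] K) → K)
    (hf : IsNormalizedCocycle f)
    (hfS : ∀ σ τ : K ≃ₐ[F] K, f σ τ ∈ integralClosure V K)
    {D : Type u} [Ring D] [Algebra F D] [Algebra V D] [IsScalarTower V F D]
    (ι : K →ₐ[F] D) (x : (K ≃ₐ[F] K) → D) (A : Subalgebra V D)
    (hA : IsCrossedProduct (integralClosure V K).toSubring f ι x A)
    -- `H ≠ G`
    (hHne : {τ : K ≃ₐ[F] K |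
      IsUnit (⟨f τ τ⁻¹, hfS τ τ⁻¹⟩ : integralClosure V K)} ≠ Set.univ)
    -- `A_f` is a maximal order
    (hmax : IsMaximalOrder V F A)
    -- `H` is a normal subgroup of `G`
    (hnormal : ∀ g τ : K ≃ₐ[F] K,
      IsUnit (⟨f τ τ⁻¹, hfS τ τ⁻¹⟩ : integralClosure V K) →
      IsUnit (⟨f (g * τ * g⁻¹) (g * τ * g⁻¹)⁻¹,
        hfS (g * τ * g⁻¹) (g * τ * g⁻¹)⁻¹⟩ : integralClosure V K))
    (σ : K ≃ₐ[F] K) (m : ℕ) (hm : 0 < m)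
    -- `v(f(σ,σ⁻¹)) ≤ 1`
    (hσ : (⟨f σ σ⁻¹, hfS σ σ⁻¹⟩ : integralClosure V K) ∉
      (Ideal.jacobson (⊥ : Ideal (integralClosure V K))) ^ 2)
    -- `G/H` is cyclic of order `m = |G/H|`, generated by `σH`: every `τ ∈ G` lies in
    -- exactly one coset `σ^i H`, `0 ≤ i ≤ m-1`
    (hcosets : ∀ τ : K ≃ₐ[F] K, ∃! i : Fin m,
      IsUnit (⟨f ((σ ^ (i : ℕ))⁻¹ * τ) (((σ ^ (i : ℕ))⁻¹ * τ)⁻¹),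
        hfS ((σ ^ (i : ℕ))⁻¹ * τ) (((σ ^ (i : ℕ))⁻¹ * τ)⁻¹)⟩ : integralClosure V K))
    -- the graph of `f` is the chain `H ≤ σH ≤ σ²H ≤ ⋯ ≤ σ^{m-1}H`
    (hchain : ∀ i j : Fin m,
      IsUnit (⟨f (σ ^ (i : ℕ)) ((σ ^ (i : ℕ))⁻¹ * σ ^ (j : ℕ)),
        hfS (σ ^ (i : ℕ)) ((σ ^ (i : ℕ))⁻¹ * σ ^ (j : ℕ))⟩ : integralClosure V K) ↔
        (i : ℕ) ≤ (j : ℕ)) :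
    (∀ i : ℕ, 1 ≤ i → i ≤ m - 1 →
      (⟨f (σ ^ i) (σ ^ i)⁻¹, hfS (σ ^ i) (σ ^ i)⁻¹⟩ : integralClosure V K) ∉
        (Ideal.jacobson (⊥ : Ideal (integralClosure V K))) ^ 2) ∧
    ∀ τ : K ≃ₐ[F] K,
      (⟨f τ τ⁻¹, hfS τ τ⁻¹⟩ : integralClosure V K) ∉
        (Ideal.jacobson (⊥ : Ideal (integralClosure V K))) ^ 2 := by
  classical
  refine crossed_abstract (fun α β => (⟨f α β, hfS α β⟩ : integralClosure V K))
    (galS V F K) ?_ ?_ ?_ ?_ ((Ideal.jacobson (⊥ : Ideal (integralClosure V K))) ^ 2)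
    ?_ σ m hm ?_ hσ hcosets hchain
  · intro α β γ
    exact Subtype.ext (hf.1 α β γ)
  · intro α a
    constructor
    · intro h
      have h2 := h.map (galS V F K α⁻¹)
      rwa [show galS V F K α⁻¹ (galS V F K α a) = a from Subtype.ext (α.symm_apply_apply (a : K))] at h2
    · exact fun h => h.map (galS V F K α)
  · exact fun α => Subtype.ext (by simpa using hf.2.1 α)
  · exact fun α => Subtype.ext (by simpa using hf.2.2.1 α)
  · intro a ha hunit
    rw [IsLocalRing.jacobson_eq_maximalIdeal ⊥ bot_ne_top] at ha
    exact (IsLocalRing.mem_maximalIdeal a).mp (Ideal.pow_le_self two_ne_zero ha) hunit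
  · rw [Set.ne_univ_iff_exists_notMem] at hHne
    obtain ⟨τ, hτ⟩ := hHne
    exact ⟨τ, hτ⟩


end CrossedProductOrders
end
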